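/- Fix an integer p ≥ 2, an integer N ≥ 2, positive integers a_1, ..., a_N, and define ν(I) = Σ_{j=1}^r p^{i_1 + ⋯ + i_{j-1}} a_{i_j} and the weight μ(I) = i_1 + ⋯ + i_r for I ∈ {1,...,N}^r. If I and J both minimize ν over {1,...,N}^r, then |μ(I) − μ(J)| < N. -/

import Mathlib

/-!
Let `a_m` be the least value of `a`. Comparing a minimizer `I = (i, I')` with the rotated tuple
`(I', m)` gives `ν(I) < p^{μ(I)} a_m`. On the other hand, the last summand of any tuple `J` gives
`p^{μ(J)} a_m ≤ p^N ν(J)`, because the last letter contributes at most `N` to the weight. For two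
minimizers `ν(I) = ν(J)`, hence `p^{μ(J)} < p^{μ(I) + N}`.
-/

/-- The valuation `ν(I) = ∑_{j=1}^r p^(i_1 + ⋯ + i_{j-1}) · a_{i_j}` of a tuple
`I ∈ {1,…,N}^r`, where the entry `I j : Fin N` represents the value `(I j) + 1`. -/
def tupleVal (p : ℕ) {N r : ℕ} (a : Fin N → ℕ) (I : Fin r → Fin N) : ℕ :=
  ∑ j : Fin r, p ^ (∑ l ∈ Finset.Iio j, ((I l : ℕ) + 1)) * a (I j)

/-- The weight `μ(I) = i_1 + ⋯ + i_r` of a tuple `I ∈ {1,…,N}^r`. -/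
def tupleWeight {N r : ℕ} (I : Fin r → Fin N) : ℕ :=
  ∑ j : Fin r, ((I j : ℕ) + 1)

open Finset

theorem Fin.sum_Iio_succ {M : Type*} [AddCommMonoid M] {n : ℕ} (g : Fin (n + 1) → M)
    (j : Fin n) : ∑ l ∈ Iio j.succ, g l = g 0 + ∑ l ∈ Iio j, g l.succ := by
  rw [← Ico_bot, bot_eq_zero, ← Ioo_insert_left (Fin.succ_pos j), sum_insert left_notMem_Ioo,
    ← Fin.map_succEmb_Iio, sum_map]
  rfl

section Tuples

variable {N r : ℕ}

theorem tupleWeight_cons (i : Fin N) (I : Fin r → Fin N) :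
    tupleWeight (Fin.cons i I : Fin (r + 1) → Fin N) = (i + 1) + tupleWeight I := by
  simp only [tupleWeight, Fin.sum_univ_succ, Fin.cons_zero, Fin.cons_succ]

theorem tupleWeight_snoc (I : Fin r → Fin N) (i : Fin N) :
    tupleWeight (Fin.snoc I i : Fin (r + 1) → Fin N) = tupleWeight I + (i + 1) := by
  simp only [tupleWeight, Fin.sum_univ_castSucc, Fin.snoc_castSucc, Fin.snoc_last]

variable {p : ℕ} {a : Fin N → ℕ}

variable (p a) in
theorem tupleVal_cons (i : Fin N) (I : Fin r → Fin N) :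
    tupleVal p a (Fin.cons i I : Fin (r + 1) → Fin N) =
      a i + p ^ ((i : ℕ) + 1) * tupleVal p a I := by
  have h0 : Iio (0 : Fin (r + 1)) = ∅ := by rw [← bot_eq_zero, Iio_bot]
  simp only [tupleVal, Fin.sum_univ_succ, h0, sum_empty, pow_zero, one_mul, Fin.sum_Iio_succ,
    Fin.cons_zero, Fin.cons_succ, mul_sum, pow_add, mul_assoc]

variable (p a) in
theorem tupleVal_snoc (I : Fin r → Fin N) (i : Fin N) :
    tupleVal p a (Fin.snoc I i : Fin (r + 1) → Fin N) =
      tupleVal p a I + p ^ tupleWeight I * a i := by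
  simp only [tupleVal, tupleWeight, Fin.sum_univ_castSucc, Fin.sum_Iio_castSucc,
    Fin.Iio_last_eq_map, sum_map, Fin.castSuccEmb_apply, Fin.snoc_castSucc, Fin.snoc_last]

theorem tupleVal_cons_lt_of_le_snoc (hp : 2 ≤ p) {i m : Fin N} (hi : 0 < a i)
    {I : Fin r → Fin N} (h : tupleVal p a (Fin.cons i I) ≤ tupleVal p a (Fin.snoc I m)) :
    tupleVal p a (Fin.cons i I : Fin (r + 1) → Fin N) <
      p ^ tupleWeight (Fin.cons i I : Fin (r + 1) → Fin N) * a m := by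
  rw [tupleVal_cons, tupleWeight_cons, pow_add p ((i : ℕ) + 1)]
  rw [tupleVal_cons, tupleVal_snoc] at h
  set q := p ^ ((i : ℕ) + 1)
  have hq : 2 ≤ q := hp.trans (Nat.le_self_pow (Nat.succ_ne_zero _) p)
  have hqh := Nat.mul_le_mul_left q h
  have hai : 2 * a i ≤ q * a i := Nat.mul_le_mul_right _ hq
  have hV : 2 * (q * tupleVal p a I) ≤ q * (q * tupleVal p a I) := Nat.mul_le_mul_right _ hq
  linarith

theorem pow_tupleWeight_mul_le_pow_mul_tupleVal (hp : 0 < p) {m : Fin N} (hm : ∀ i, a m ≤ a i)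
    (J : Fin (r + 1) → Fin N) : p ^ tupleWeight J * a m ≤ p ^ N * tupleVal p a J := by
  induction J using Fin.snocCases with
  | snoc J i =>
    rw [tupleWeight_snoc, tupleVal_snoc]
    calc p ^ (tupleWeight J + (i + 1)) * a m
        = p ^ tupleWeight J * (p ^ ((i : ℕ) + 1) * a m) := by ring
      _ ≤ p ^ tupleWeight J * (p ^ N * a i) :=
          Nat.mul_le_mul_left _ (Nat.mul_le_mul (Nat.pow_le_pow_right hp i.isLt) (hm i))
      _ = p ^ N * (p ^ tupleWeight J * a i) := by ring
      _ ≤ p ^ N * (tupleVal p a J + p ^ tupleWeight J * a i) :=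
          Nat.mul_le_mul_left _ (Nat.le_add_left _ _)

theorem tupleWeight_lt_add_of_tupleVal_le (hp : 2 ≤ p) (ha : ∀ i, 0 < a i)
    {I J : Fin (r + 1) → Fin N} (hI : ∀ K : Fin (r + 1) → Fin N, tupleVal p a I ≤ tupleVal p a K)
    (hJ : tupleVal p a J ≤ tupleVal p a I) : tupleWeight J < tupleWeight I + N := by
  obtain ⟨m, -, hm⟩ := exists_min_image univ a ⟨I 0, mem_univ _⟩
  have upper : tupleVal p a I < p ^ tupleWeight I * a m := by
    rw [← Fin.cons_self_tail I]
    exact tupleVal_cons_lt_of_le_snoc hp (ha _) (Fin.cons_self_tail I ▸ hI _)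
  have key : p ^ tupleWeight J * a m < p ^ (tupleWeight I + N) * a m :=
    calc p ^ tupleWeight J * a m
        ≤ p ^ N * tupleVal p a J :=
          pow_tupleWeight_mul_le_pow_mul_tupleVal (by omega) (fun i => hm i (mem_univ i)) J
      _ ≤ p ^ N * tupleVal p a I := Nat.mul_le_mul_left _ hJ
      _ < p ^ N * (p ^ tupleWeight I * a m) := Nat.mul_lt_mul_of_pos_left upper (by positivity)
      _ = p ^ (tupleWeight I + N) * a m := by ring
  exact (Nat.pow_lt_pow_iff_right (by omega)).1 (Nat.lt_of_mul_lt_mul_right key)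

end Tuples

theorem weights_of_minimizers_close_general
    (p N r : ℕ) (hp : 2 ≤ p) (hr : 1 ≤ r)
    (a : Fin N → ℕ) (ha : ∀ i, 0 < a i)
    (I J : Fin r → Fin N)
    (hI : ∀ K : Fin r → Fin N, tupleVal p a I ≤ tupleVal p a K)
    (hJ : ∀ K : Fin r → Fin N, tupleVal p a J ≤ tupleVal p a K) :
    |(tupleWeight I : ℤ) - (tupleWeight J : ℤ)| < N := by
  obtain ⟨r, rfl⟩ : ∃ r', r = r' + 1 := ⟨r - 1, by omega⟩
  have hJI := tupleWeight_lt_add_of_tupleVal_le hp ha hI (hJ I)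
  have hIJ := tupleWeight_lt_add_of_tupleVal_le hp ha hJ (hI J)
  rw [abs_lt]
  omega

/-- If `I` and `J` both minimize `ν` over `{1,…,N}^r`, then their weights differ
by less than `N`. -/
theorem weights_of_minimizers_close
    (p N r : ℕ) (hp : 2 ≤ p) (hN : 2 ≤ N) (hr : 1 ≤ r)
    (a : Fin N → ℕ) (ha : ∀ i, 0 < a i)
    (I J : Fin r → Fin N)
    (hI : ∀ K : Fin r → Fin N, tupleVal p a I ≤ tupleVal p a K)
    (hJ : ∀ K : Fin r → Fin N, tupleVal p a J ≤ tupleVal p a K) :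
    |(tupleWeight I : ℤ) - (tupleWeight J : ℤ)| < N :=
  weights_of_minimizers_close_general p N r hp hr a ha I J hI hJ
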